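/- Let q be an odd prime power with q ≡ 1 (mod 4). In the finite field F_q, the number of elements x such that x is a nonzero nonsquare and x+1 is a nonzero square equals (q-1)/4, and the number of x such that x is a nonzero nonsquare and x+1 is a nonzero nonsquare also equals (q-1)/4. -/

import Mathlib

/-!
With `χ` the quadratic character, `(1 - χ x)(1 + ε χ(x + 1))` is `4` when `χ x = -1` and
`χ (x + 1) = ε`, and `0` otherwise except at `x = 0` and `x = -1`. Summing over `F`, the linear
terms vanish and the cross term is the Jacobi sum `∑ χ x χ(x + 1) = -1`, so either count is
`(q - 2 + χ(-1)) / 4`; for `q ≡ 1 mod 4`, `χ(-1) = 1`.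
-/

open Finset

section QuadraticCharCounts

variable {F : Type*} [Field F] [Fintype F] [DecidableEq F]

local notation "χ" => quadraticChar F

theorem quadraticChar_eq_one_iff {a : F} : χ a = 1 ↔ a ≠ 0 ∧ IsSquare a := by
  by_cases ha : a = 0
  · simp [ha]
  · simp [ha, ← quadraticChar_one_iff_isSquare ha]

theorem quadraticChar_eq_neg_one_iff {a : F} : χ a = -1 ↔ a ≠ 0 ∧ ¬IsSquare a := by
  rw [quadraticChar_neg_one_iff_not_isSquare, iff_and_self]
  rintro hns rfl
  exact hns IsSquare.zero

-- The Jacobi sum `J(χ, χ) = -χ(-1)`, after the substitution `x ↦ -x`.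
theorem sum_quadraticChar_mul_quadraticChar_add_one (hF : ringChar F ≠ 2) :
    ∑ x : F, χ x * χ (x + 1) = -1 := by
  have hJ := jacobiSum_nontrivial_inv (quadraticChar_ne_one hF)
  rw [(quadraticChar_isQuadratic F).inv, jacobiSum] at hJ
  calc ∑ x : F, χ x * χ (x + 1) = ∑ x : F, χ (-x) * χ (-x + 1) :=
        (Fintype.sum_equiv (Equiv.neg F) _ _ fun x => by simp).symm
    _ = χ (-1) * ∑ x : F, χ x * χ (1 - x) := by
        rw [mul_sum]
        refine sum_congr rfl fun x _ => ?_
        rw [neg_eq_neg_one_mul x, map_mul, neg_one_mul, neg_add_eq_sub, mul_assoc]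
    _ = -1 := by
        rw [hJ, mul_neg, ← sq, quadraticChar_sq_one (neg_ne_zero.mpr one_ne_zero)]

theorem one_sub_quadraticChar_mul_one_add_quadraticChar_add_one {ε : ℤ} (hε : ε = 1 ∨ ε = -1)
    (x : F) :
    (1 - χ x) * (1 + ε * χ (x + 1)) =
      (if x = 0 then 1 + ε else 0) + (if x = -1 then 1 - χ (-1) else 0) +
        if χ x = -1 ∧ χ (x + 1) = ε then 4 else 0 := by
  by_cases hx : x = 0
  · simp [hx]
  by_cases hx1 : x = -1
  · rcases hε with rfl | rfl <;> simp [hx1]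
  have hx1' : x + 1 ≠ 0 := fun h => hx1 (eq_neg_of_add_eq_zero_left h)
  rcases quadraticChar_dichotomy hx with h | h <;>
    rcases quadraticChar_dichotomy hx1' with h' | h' <;>
    rcases hε with rfl | rfl <;> norm_num [hx, hx1, h, h']

theorem four_mul_card_quadraticChar_eq_neg_one_and_add_one (hF : ringChar F ≠ 2) {ε : ℤ}
    (hε : ε = 1 ∨ ε = -1) :
    4 * (#{x : F | χ x = -1 ∧ χ (x + 1) = ε} : ℤ) = Fintype.card F - 2 + χ (-1) := by
  have hshift : ∑ x : F, χ (x + 1) = 0 := by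
    rw [← quadraticChar_sum_zero hF]
    exact Fintype.sum_equiv (Equiv.addRight 1) _ _ fun x => rfl
  have hsum : ∑ x : F, (1 - χ x) * (1 + ε * χ (x + 1)) = Fintype.card F + ε := by
    simp only [fun x => show (1 - χ x) * (1 + ε * χ (x + 1)) =
        1 + ε * χ (x + 1) - χ x - ε * (χ x * χ (x + 1)) by ring]
    rw [sum_sub_distrib, sum_sub_distrib, sum_add_distrib, ← mul_sum, ← mul_sum, hshift,
      quadraticChar_sum_zero hF, sum_quadraticChar_mul_quadraticChar_add_one hF]
    simp
  simp only [one_sub_quadraticChar_mul_one_add_quadraticChar_add_one hε, sum_add_distrib,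
    sum_ite_eq', mem_univ, if_true, sum_ite, sum_const_zero, sum_const, nsmul_eq_mul] at hsum
  linarith

end QuadraticCharCounts

theorem stmt_6_general (q : ℕ) (F : Type*) [Field F] [Fintype F]
    (hq : Fintype.card F = q) (h4 : q % 4 = 1) :
    Nat.card {x : F // (x ≠ 0 ∧ ¬ IsSquare x) ∧ (x + 1 ≠ 0 ∧ IsSquare (x + 1))} =
      (q - 1) / 4 ∧
    Nat.card {x : F // (x ≠ 0 ∧ ¬ IsSquare x) ∧ (x + 1 ≠ 0 ∧ ¬ IsSquare (x + 1))} =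
      (q - 1) / 4 := by
  classical
  subst hq
  have hF : ringChar F ≠ 2 := fun h => by
    have := FiniteField.even_card_of_char_two h
    omega
  have hneg : quadraticChar F (-1) = 1 := by
    rw [quadraticChar_neg_one hF]
    exact ZMod.χ₄_nat_one_mod_four h4
  have hcard {ε : ℤ} (hε : ε = 1 ∨ ε = -1) :
      #{x : F | quadraticChar F x = -1 ∧ quadraticChar F (x + 1) = ε} =
        (Fintype.card F - 1) / 4 := by
    have h := four_mul_card_quadraticChar_eq_neg_one_and_add_one hF hε
    rw [hneg] at h
    omega
  simp only [Nat.card_eq_fintype_card, Fintype.card_subtype, ← quadraticChar_eq_one_iff,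
    ← quadraticChar_eq_neg_one_iff]
  exact ⟨hcard (.inl rfl), hcard (.inr rfl)⟩

theorem stmt_6 (q : ℕ) (F : Type*) [Field F] [Fintype F]
    (hq : Fintype.card F = q) (hodd : Odd q) (h4 : q % 4 = 1) :
    Nat.card {x : F // (x ≠ 0 ∧ ¬ IsSquare x) ∧ (x + 1 ≠ 0 ∧ IsSquare (x + 1))} =
      (q - 1) / 4 ∧
    Nat.card {x : F // (x ≠ 0 ∧ ¬ IsSquare x) ∧ (x + 1 ≠ 0 ∧ ¬ IsSquare (x + 1))} =
      (q - 1) / 4 :=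
  stmt_6_general q F hq h4
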